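/- arXiv:2106.01470 — 4 statements merged into one kernel-verified Lean document; each statement's English description precedes it below -/
import Mathlib

section
/- For every fixed integer K ≥ 0, the remainder R_{n,K} = n^K · ∑_{k=K+1}^{n} ((n−k)!/n!) · ∑_{q ⊢ k, q with no part equal to 1} Sym(q) tends to 0 as n → ∞. -/
open Finset Filter

section basics
variable {k : ℕ} (q : Nat.Partition k)

lemma parts_le {i : ℕ} (hi : i ∈ q.parts) : i ≤ k := by
  have := Multiset.le_sum_of_mem hi
  rwa [q.parts_sum] at this

lemma toFinset_subset : q.parts.toFinset ⊆ Finset.range (k+1) := by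
  intro i hi
  simp only [Multiset.mem_toFinset] at hi
  exact Finset.mem_range.2 (Nat.lt_succ_of_le (parts_le q hi))

lemma sum_count : ∑ i ∈ Finset.range (k+1), q.parts.count i = Multiset.card q.parts := by
  rw [← Multiset.toFinset_sum_count_eq]
  exact (Finset.sum_subset (toFinset_subset q) (by
    intro x hx hx'
    simp only [Multiset.mem_toFinset] at hx'
    exact Multiset.count_eq_zero_of_notMem hx')).symm

lemma sum_mul_count : ∑ i ∈ Finset.range (k+1), q.parts.count i * i = k := by
  have h : (q.parts.map id).sum = ∑ a ∈ q.parts.toFinset, q.parts.count a • id a :=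
    Finset.sum_multiset_map_count q.parts id
  simp only [id_eq, smul_eq_mul] at h
  have hs : (Multiset.map (fun x => x) q.parts).sum = k := by
    rw [Multiset.map_id', q.parts_sum]
  rw [hs] at h
  rw [← Finset.sum_subset (toFinset_subset q) (fun x _ hx' => by
    simp only [Multiset.mem_toFinset] at hx'
    simp [Multiset.count_eq_zero_of_notMem hx']), ← h]

lemma card_le_sum : Multiset.card q.parts ≤ k := by
  have : Multiset.card q.parts • 1 ≤ q.parts.sum :=
    Multiset.card_nsmul_le_sum (fun x hx => q.parts_pos hx)
  simpa [q.parts_sum] using this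

lemma card_le_half (h1 : 1 ∉ q.parts) : Multiset.card q.parts ≤ k / 2 := by
  have : Multiset.card q.parts • 2 ≤ q.parts.sum := by
    apply Multiset.card_nsmul_le_sum
    intro x hx
    rcases Nat.lt_or_ge x 2 with h | h
    · interval_cases x
      · exact absurd (q.parts_pos hx) (by simp)
      · exact absurd hx h1
    · exact h
  rw [q.parts_sum, smul_eq_mul] at this
  omega

lemma count_one_eq_zero (h1 : 1 ∉ q.parts) : q.parts.count 1 = 0 :=
  Multiset.count_eq_zero_of_notMem h1
end basics

def symFactor {n : ℕ} (p : n.Partition) : ℕ :=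
  ∏ i ∈ Finset.range (n + 1), i ^ p.parts.count i * (p.parts.count i).factorial

def symSumNoOnes (k : ℕ) : ℕ :=
  ∑ q ∈ Finset.univ.filter (fun q : Nat.Partition k => 1 ∉ q.parts), symFactor q

lemma symFactor_le {k : ℕ} (q : Nat.Partition k) (h1 : 1 ∉ q.parts) :
    symFactor q ≤ 2 ^ k * (k / 2).factorial := by
  rw [symFactor, Finset.prod_mul_distrib]
  apply Nat.mul_le_mul
  · calc ∏ i ∈ Finset.range (k+1), i ^ q.parts.count i
        ≤ ∏ i ∈ Finset.range (k+1), (2 ^ i) ^ q.parts.count i := by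
          apply Finset.prod_le_prod'
          intro i _
          exact Nat.pow_le_pow_left (Nat.le_of_lt (Nat.lt_two_pow_self (n := i))) _
      _ = 2 ^ ∑ i ∈ Finset.range (k+1), i * q.parts.count i := by
          rw [← Finset.prod_pow_eq_pow_sum]
          apply Finset.prod_congr rfl
          intro i _
          rw [← pow_mul]
      _ = 2 ^ k := by
          congr 1
          exact (Finset.sum_congr rfl fun i _ => mul_comm _ _).trans (sum_mul_count q)
  · calc ∏ i ∈ Finset.range (k+1), (q.parts.count i).factorial
        ≤ (∑ i ∈ Finset.range (k+1), q.parts.count i).factorial :=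
          Nat.le_of_dvd (Nat.factorial_pos _)
            (Nat.prod_factorial_dvd_factorial_sum _ _)
      _ ≤ (k / 2).factorial :=
          Nat.factorial_le (by rw [sum_count q]; exact card_le_half q h1)

section inj
variable {k : ℕ}

def pcount (q : Nat.Partition k) (j : ℕ) : ℕ := ∑ i ∈ Finset.range (j+1), q.parts.count i

lemma pcount_mono (q : Nat.Partition k) {a b : ℕ} (hab : a ≤ b) : pcount q a ≤ pcount q b :=
  Finset.sum_le_sum_of_subset (Finset.range_subset_range.2 (by omega))

lemma pcount_le (q : Nat.Partition k) {j : ℕ} (hj : j ≤ k) : pcount q j ≤ k :=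
  calc pcount q j ≤ pcount q k := pcount_mono q hj
    _ = Multiset.card q.parts := sum_count q
    _ ≤ k := card_le_sum q

def enc (q : Nat.Partition k) : Finset ℕ :=
  Finset.image (fun j : Fin (k+1) => (j : ℕ) + pcount q (j : ℕ)) Finset.univ

lemma enc_strictMono (q : Nat.Partition k) :
    StrictMono (fun j : Fin (k+1) => (j : ℕ) + pcount q (j : ℕ)) := by
  intro a b hab
  have h1 : (a : ℕ) < (b : ℕ) := hab
  have h2 : pcount q a ≤ pcount q b := pcount_mono q (le_of_lt h1)
  simp only
  omega

lemma enc_card (q : Nat.Partition k) : (enc q).card = k + 1 := by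
  rw [enc, Finset.card_image_of_injective _ (enc_strictMono q).injective,
    Finset.card_univ, Fintype.card_fin]

lemma count_zero_parts (q : Nat.Partition k) : q.parts.count 0 = 0 :=
  Multiset.count_eq_zero_of_notMem (fun h => absurd (q.parts_pos h) (by simp))

lemma count_gt (q : Nat.Partition k) {i : ℕ} (hi : k < i) : q.parts.count i = 0 :=
  Multiset.count_eq_zero_of_notMem (fun h => absurd (parts_le q h) (by omega))

lemma enc_injective : Function.Injective (enc : Nat.Partition k → Finset ℕ) := by
  intro q q' h
  have h1 := Finset.orderEmbOfFin_unique (enc_card q)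
      (fun x => Finset.mem_image_of_mem _ (Finset.mem_univ x)) (enc_strictMono q)
  have h2 := Finset.orderEmbOfFin_unique (enc_card q)
      (f := fun j : Fin (k+1) => (j : ℕ) + pcount q' (j : ℕ))
      (fun x => h ▸ Finset.mem_image_of_mem _ (Finset.mem_univ x)) (enc_strictMono q')
  have hF : ∀ j : Fin (k+1), (j : ℕ) + pcount q (j : ℕ) = (j : ℕ) + pcount q' (j : ℕ) := by
    intro j
    have := congrFun (h1.trans h2.symm) j
    simpa using this
  have hP : ∀ j, j ≤ k → pcount q j = pcount q' j := by
    intro j hj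
    have := hF ⟨j, by omega⟩
    simp only at this
    omega
  have hc : ∀ i, q.parts.count i = q'.parts.count i := by
    intro i
    rcases Nat.eq_zero_or_pos i with rfl | hi
    · rw [count_zero_parts, count_zero_parts]
    rcases le_or_gt i k with hik | hik
    · have e1 : pcount q i = pcount q (i-1) + q.parts.count i := by
        have : i - 1 + 1 = i := by omega
        rw [pcount, pcount, this, Finset.sum_range_succ]
      have e2 : pcount q' i = pcount q' (i-1) + q'.parts.count i := by
        have : i - 1 + 1 = i := by omega
        rw [pcount, pcount, this, Finset.sum_range_succ]
      have := hP i hik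
      have := hP (i-1) (by omega)
      omega
    · rw [count_gt q hik, count_gt q' hik]
  have : q.parts = q'.parts := Multiset.ext.2 hc
  cases q; cases q'; simpa using this

lemma card_partition_le (k : ℕ) : Fintype.card (Nat.Partition k) ≤ 2 ^ (2*k+2) := by
  rw [← Finset.card_univ]
  have h : (Finset.univ : Finset (Nat.Partition k)).card
      ≤ ((Finset.range (2*k+2)).powerset).card := by
    apply Finset.card_le_card_of_injOn enc
    · intro q _
      simp only [Finset.mem_coe, Finset.mem_powerset]
      intro x hx
      simp only [enc, Finset.mem_image] at hx
      obtain ⟨j, _, rfl⟩ := hx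
      have hj : (j : ℕ) ≤ k := Nat.lt_succ_iff.1 j.isLt
      have := pcount_le q hj
      simp only [Finset.mem_range]
      omega
    · intro a _ b _ hab
      exact enc_injective hab
  simpa [Finset.card_powerset, Finset.card_range] using h

end inj

lemma symSum_le (k : ℕ) :
    symSumNoOnes k ≤ 2 ^ (2*k+2) * (2 ^ k * (k / 2).factorial) := by
  rw [symSumNoOnes]
  calc ∑ q ∈ Finset.univ.filter (fun q : Nat.Partition k => 1 ∉ q.parts), symFactor q
      ≤ (Finset.univ.filter (fun q : Nat.Partition k => 1 ∉ q.parts)).card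
          * (2 ^ k * (k / 2).factorial) := by
        have := Finset.sum_le_card_nsmul
          (Finset.univ.filter (fun q : Nat.Partition k => 1 ∉ q.parts)) symFactor
          (2 ^ k * (k / 2).factorial)
          (fun q hq => symFactor_le q (Finset.mem_filter.1 hq).2)
        simpa [smul_eq_mul] using this
    _ ≤ 2 ^ (2*k+2) * (2 ^ k * (k / 2).factorial) := by
        apply Nat.mul_le_mul_right
        calc (Finset.univ.filter (fun q : Nat.Partition k => 1 ∉ q.parts)).card
            ≤ (Finset.univ : Finset (Nat.Partition k)).card := Finset.card_filter_le _ _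
          _ ≤ 2 ^ (2*k+2) := by rw [Finset.card_univ]; exact card_partition_le k

lemma fact_div_le {n u : ℕ} (hun : u ≤ n) (h2 : n ≤ 2*(n - u + 1)) (hn : 0 < n) :
    ((n-u).factorial : ℝ) / n.factorial ≤ (2 / n) ^ u := by
  have key : ((n-u).factorial : ℝ) * ((n:ℝ)/2)^u ≤ (n.factorial : ℝ) := by
    have h1 : (n-u).factorial * (n-u+1)^u ≤ n.factorial := by
      have := @Nat.factorial_mul_pow_le_factorial (n-u) u
      rwa [Nat.sub_add_cancel hun] at this
    calc ((n-u).factorial : ℝ) * ((n:ℝ)/2)^u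
        ≤ ((n-u).factorial : ℝ) * ((n-u+1 : ℕ) : ℝ)^u := by
          apply mul_le_mul_of_nonneg_left _ (by positivity)
          apply pow_le_pow_left₀ (by positivity)
          rw [div_le_iff₀ (by norm_num : (0:ℝ) < 2)]
          calc (n:ℝ) ≤ ((2*(n-u+1) : ℕ) : ℝ) := by exact_mod_cast h2
            _ = ((n-u+1 : ℕ) : ℝ) * 2 := by push_cast; ring
      _ ≤ (n.factorial : ℝ) := by exact_mod_cast h1
  rw [div_le_iff₀ (by positivity : (0:ℝ) < (n.factorial : ℝ))]
  rw [show ((2:ℝ)/n)^u = (((n:ℝ)/2)^u)⁻¹ by rw [← inv_pow, inv_div]]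
  rw [inv_mul_eq_div, le_div_iff₀ (by positivity : (0:ℝ) < ((n:ℝ)/2)^u)]
  exact key

def cKnat (K : ℕ) : ℕ := 2^(2*(2*K+2)+2) * (2^(2*K+2) * (K+1).factorial)

lemma symSum_le_cK {K k : ℕ} (hk : k ≤ 2*K+2) : symSumNoOnes k ≤ cKnat K := by
  refine (symSum_le k).trans ?_
  exact Nat.mul_le_mul (Nat.pow_le_pow_right (by norm_num) (by omega))
    (Nat.mul_le_mul (Nat.pow_le_pow_right (by norm_num) (by omega))
      (Nat.factorial_le (by omega)))

lemma small_term {K n k : ℕ} (hn : 128 + 2*K + 3 ≤ n) (hk : k ∈ Finset.Ioc K (2*K+2)) :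
    ((n-k).factorial : ℝ) / n.factorial * (symSumNoOnes k : ℝ)
      ≤ (cKnat K : ℝ) * (2/n)^(K+1) := by
  obtain ⟨hk1, hk2⟩ := Finset.mem_Ioc.1 hk
  have h1 : ((n-k).factorial : ℝ) / n.factorial * (symSumNoOnes k : ℝ)
      ≤ ((n-(K+1)).factorial : ℝ) / n.factorial * (cKnat K : ℝ) := by
    gcongr
    · omega
    · exact_mod_cast symSum_le_cK hk2
  refine h1.trans ?_
  rw [mul_comm]
  exact mul_le_mul_of_nonneg_left (fact_div_le (by omega) (by omega) (by omega))
    (by positivity)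

lemma large_term {K n k : ℕ} (hn : 128 + 2*K + 3 ≤ n) (hk : k ∈ Finset.Ioc (2*K+2) n) :
    ((n-k).factorial : ℝ) / n.factorial * (symSumNoOnes k : ℝ)
      ≤ 4 * (128/n)^(K+2) := by
  obtain ⟨hk1, hk2⟩ := Finset.mem_Ioc.1 hk
  set u := k - k/2 with hu
  have hfac : (k/2).factorial * (n-k).factorial ≤ (n-u).factorial := by
    have hd := Nat.factorial_mul_factorial_dvd_factorial_add (k/2) (n-k)
    have he : k/2 + (n-k) = n - u := by omega
    rw [he] at hd
    exact Nat.le_of_dvd (Nat.factorial_pos _) hd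
  have h1 : ((n-k).factorial : ℝ) / n.factorial * (symSumNoOnes k : ℝ)
      ≤ ((n-k).factorial : ℝ) / n.factorial * (2^(2*k+2) * (2^k * ((k/2).factorial : ℝ))) := by
    gcongr ((n-k).factorial : ℝ) / n.factorial * ?_
    exact_mod_cast symSum_le k
  have hpow : ((2:ℝ)^(2*k+2) * 2^k) = 4 * 8^k := by
    rw [← pow_add, show 2*k+2+k = 3*k+2 by ring, pow_add, pow_mul]
    norm_num [mul_comm]
  have h2 : ((n-k).factorial : ℝ) / n.factorial * (2^(2*k+2) * (2^k * ((k/2).factorial : ℝ)))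
      = (4 * 8^k) * (((k/2).factorial : ℝ) * ((n-k).factorial : ℝ) / n.factorial) := by
    rw [← hpow]; ring
  have h3 : ((k/2).factorial : ℝ) * ((n-k).factorial : ℝ) / n.factorial
      ≤ ((n-u).factorial : ℝ) / n.factorial := by
    gcongr
    exact_mod_cast hfac
  have h4 : ((n-u).factorial : ℝ) / n.factorial ≤ (2/(n:ℝ))^u :=
    fact_div_le (by omega) (by omega) (by omega)
  calc ((n-k).factorial : ℝ) / n.factorial * (symSumNoOnes k : ℝ)
      ≤ (4 * 8^k) * (((k/2).factorial : ℝ) * ((n-k).factorial : ℝ) / n.factorial) :=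
        h1.trans_eq h2
    _ ≤ (4 * 8^k) * (((n-u).factorial : ℝ) / n.factorial) :=
        mul_le_mul_of_nonneg_left h3 (by positivity)
    _ ≤ (4 * 8^k) * ((2/(n:ℝ))^u) :=
        mul_le_mul_of_nonneg_left h4 (by positivity)
    _ ≤ 4 * (64:ℝ)^u * (2/(n:ℝ))^u := by
        gcongr
        calc (8:ℝ)^k ≤ 8^(2*u) := by
              apply pow_le_pow_right₀ (by norm_num)
              omega
          _ = 64^u := by rw [pow_mul]; norm_num
    _ = 4 * (128/(n:ℝ))^u := by
        rw [mul_assoc, ← mul_pow]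
        congr 2
        ring
    _ ≤ 4 * (128/(n:ℝ))^(K+2) := by
        have hn0 : (0:ℝ) < n := by exact_mod_cast (by omega : 0 < n)
        have hb : (128:ℝ)/n ≤ 1 := by
          rw [div_le_one hn0]
          exact_mod_cast (by omega : (128:ℕ) ≤ n)
        have hb0 : (0:ℝ) ≤ 128/(n:ℝ) := by positivity
        have hm := pow_le_pow_of_le_one hb0 hb (by omega : K+2 ≤ u)
        exact mul_le_mul_of_nonneg_left hm (by norm_num)

/-- For every fixed `K ≥ 0`, the remainder
`R_{n,K} = n^K · ∑_{k=K+1}^{n} ((n−k)!/n!) · ∑_{q ⊢ k, no part 1} Sym(q)`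
tends to `0` as `n → ∞`. -/
theorem remainder_tendsto_zero (K : ℕ) :
    Tendsto (fun n : ℕ =>
      (n : ℝ) ^ K * ∑ k ∈ Finset.Icc (K + 1) n,
        ((n - k).factorial : ℝ) / (n.factorial : ℝ) * (symSumNoOnes k : ℝ))
      atTop (nhds 0) := by
  set C : ℝ := (K+2) * (cKnat K : ℝ) * 2^(K+1) + 4 * 128^(K+2) with hC
  refine squeeze_zero' ?_ ?_ (tendsto_const_div_atTop_nhds_zero_nat C)
  · filter_upwards with n
    apply mul_nonneg (by positivity)
    exact Finset.sum_nonneg fun k _ => by positivity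
  · filter_upwards [eventually_ge_atTop (128 + 2*K + 3)] with n hn
    have hn0 : (0:ℝ) < n := by exact_mod_cast (by omega : 0 < n)
    have hne : (n:ℝ) ≠ 0 := hn0.ne'
    have hsplit : ∑ k ∈ Finset.Icc (K+1) n,
          ((n-k).factorial : ℝ)/n.factorial * (symSumNoOnes k : ℝ)
        = (∑ k ∈ Finset.Ioc K (2*K+2),
            ((n-k).factorial : ℝ)/n.factorial * (symSumNoOnes k : ℝ))
          + ∑ k ∈ Finset.Ioc (2*K+2) n,
            ((n-k).factorial : ℝ)/n.factorial * (symSumNoOnes k : ℝ) := by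
      rw [Finset.Icc_add_one_left_eq_Ioc]
      exact (Finset.sum_Ioc_consecutive _ (by omega) (by omega)).symm
    rw [hsplit, mul_add]
    have hS1 : (∑ k ∈ Finset.Ioc K (2*K+2),
          ((n-k).factorial : ℝ)/n.factorial * (symSumNoOnes k : ℝ))
        ≤ (K+2 : ℝ) * ((cKnat K : ℝ) * (2/n)^(K+1)) := by
      have h := Finset.sum_le_card_nsmul (Finset.Ioc K (2*K+2)) _
        ((cKnat K : ℝ) * (2/n)^(K+1)) (fun k hk => small_term hn hk)
      rw [Nat.card_Ioc] at h
      have hc : 2*K+2 - K = K+2 := by omega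
      rw [hc] at h
      rw [nsmul_eq_mul] at h
      exact_mod_cast h
    have hS2 : (∑ k ∈ Finset.Ioc (2*K+2) n,
          ((n-k).factorial : ℝ)/n.factorial * (symSumNoOnes k : ℝ))
        ≤ (n : ℝ) * (4 * (128/n)^(K+2)) := by
      have h := Finset.sum_le_card_nsmul (Finset.Ioc (2*K+2) n) _
        (4 * (128/(n:ℝ))^(K+2)) (fun k hk => large_term hn hk)
      rw [Nat.card_Ioc, nsmul_eq_mul] at h
      refine h.trans ?_
      apply mul_le_mul_of_nonneg_right _ (by positivity)
      exact_mod_cast Nat.sub_le n (2*K+2)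
    have e1 : (n:ℝ)^K * ((K+2 : ℝ) * ((cKnat K : ℝ) * (2/n)^(K+1)))
        = (K+2 : ℝ) * (cKnat K : ℝ) * 2^(K+1) / n := by
      rw [div_pow]
      field_simp
      ring
    have e2 : (n:ℝ)^K * ((n:ℝ) * (4 * (128/n)^(K+2))) = 4 * 128^(K+2) / n := by
      rw [div_pow]
      field_simp
      ring
    calc (n:ℝ)^K * (∑ k ∈ Finset.Ioc K (2*K+2),
            ((n-k).factorial : ℝ)/n.factorial * (symSumNoOnes k : ℝ))
          + (n:ℝ)^K * (∑ k ∈ Finset.Ioc (2*K+2) n,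
            ((n-k).factorial : ℝ)/n.factorial * (symSumNoOnes k : ℝ))
        ≤ (n:ℝ)^K * ((K+2 : ℝ) * ((cKnat K : ℝ) * (2/n)^(K+1)))
          + (n:ℝ)^K * ((n : ℝ) * (4 * (128/n)^(K+2))) := by
          apply add_le_add
          · exact mul_le_mul_of_nonneg_left hS1 (by positivity)
          · exact mul_le_mul_of_nonneg_left hS2 (by positivity)
      _ = C / n := by rw [e1, e2, hC, add_div]
end

section
/- Let Z_3(n) = ∑_{p ⊢ n} Sym(p) be the sum of symmetry factors over all partitions of n. For every fixed integer K ≥ 0, one has lim_{n→∞} n^K · ( Z_3(n)/n! − S_{3;1;K}(n)/n! ) = 0. In other words, Z_3(n)/n! admits the all-orders asymptotic expansion 1 + ∑_{k=2}^{∞} (1/(n(n−1)⋯(n−k+1))) · ∑_{q ⊢ k, q with no part equal to 1} Sym(q) as n → ∞. -/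
open Finset Filter

/-- `Z_3(n) = ∑_{p ⊢ n} Sym(p)`. -/
def Z3 (n : ℕ) : ℕ := ∑ p : Nat.Partition n, symFactor p

/-- `S_{3;1;K}(n) = ∑_{k=0}^{K} (n−k)! · ∑_{q ⊢ k, no part 1} Sym(q)`. -/
def S31 (K n : ℕ) : ℕ :=
  ∑ k ∈ Finset.range (K + 1), (n - k).factorial * symSumNoOnes k

/-!
Removing the parts equal to `1` from a partition of `n` leaves a partition of some `k ≤ n` without
ones, and the `n - k` removed ones contribute exactly the factor `(n - k)!` to `Sym`. Hence
`Z₃(n) = ∑_{k ≤ n} (n - k)! a_k` with `a_k = symSumNoOnes k`, and `Z₃(n) - S_{3;1;K}(n)` is the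
part `k > K` of this sum. A partition of `k` without ones has at most `k / 2` parts and there are
at most `2^k` partitions of `k`, so `a_k ≤ 4^k (k / 2)!`. Each term with `K < k ≤ 2K + 2` is
`O(n^(-k))` because `(n - k)! / n! ≤ (2 / n)^k`; each remaining term is at most
`(32 / n)^(k - k / 2) ≤ (32 / n)^(K + 2)`, and there are at most `n` of them.
-/

open scoped Nat Topology

theorem Multiset.prod_le_two_pow_sum (s : Multiset ℕ) : s.prod ≤ 2 ^ s.sum :=
  Multiset.induction_on s (by simp) fun a s ih => by
    rw [Multiset.prod_cons, Multiset.sum_cons, pow_add]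
    exact Nat.mul_le_mul Nat.lt_two_pow_self.le ih

namespace Nat.Partition

theorem symFactor_eq_prod_range {n N : ℕ} (p : n.Partition) (h : n ≤ N) :
    symFactor p = ∏ i ∈ range (N + 1), i ^ p.parts.count i * (p.parts.count i)! := by
  refine prod_subset (range_subset_range.2 (by omega)) fun i _ hi => ?_
  rw [Multiset.count_eq_zero.2 fun hm => hi (mem_range_succ_iff.2 (le_of_mem_parts hm))]
  simp

theorem symFactor_le {k : ℕ} (q : k.Partition) :
    symFactor q ≤ 2 ^ k * (Multiset.card q.parts)! := by
  have hsub : q.parts.toFinset ⊆ range (k + 1) := fun i hi =>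
    mem_range_succ_iff.2 (le_of_mem_parts (Multiset.mem_toFinset.1 hi))
  rw [symFactor, prod_mul_distrib, ← prod_multiset_count_of_subset _ _ hsub]
  gcongr
  · simpa only [q.parts_sum] using Multiset.prod_le_two_pow_sum q.parts
  · rw [← Multiset.sum_count_eq_card fun i hi => hsub (Multiset.mem_toFinset.2 hi)]
    exact Nat.le_of_dvd (factorial_pos _) (prod_factorial_dvd_factorial_sum _ _)

theorem two_mul_card_parts_le {k : ℕ} (q : k.Partition) (hq : 1 ∉ q.parts) :
    2 * Multiset.card q.parts ≤ k := by
  have h2 : ∀ i ∈ q.parts, 2 ≤ i := fun i hi => by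
    have := q.parts_pos hi
    have : i ≠ 1 := by rintro rfl; exact hq hi
    omega
  simpa [q.parts_sum, mul_comm] using Multiset.card_nsmul_le_sum h2

theorem card_le_two_pow (k : ℕ) : Fintype.card k.Partition ≤ 2 ^ k :=
  calc Fintype.card k.Partition ≤ Fintype.card (Composition k) :=
        Fintype.card_le_of_surjective _ ofComposition_surj
    _ = 2 ^ (k - 1) := composition_card k
    _ ≤ 2 ^ k := Nat.pow_le_pow_right two_pos (by omega)

def addOnes {k : ℕ} (q : k.Partition) {n : ℕ} (h : k ≤ n) : n.Partition where
  parts := Multiset.replicate (n - k) 1 + q.parts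
  parts_pos hi := by
    rcases Multiset.mem_add.1 hi with hi | hi
    · rw [Multiset.eq_of_mem_replicate hi]; exact one_pos
    · exact q.parts_pos hi
  parts_sum := by simp [q.parts_sum, h]

def removeOnes {n : ℕ} (p : n.Partition) : (k : ℕ) × k.Partition :=
  ⟨_, ⟨p.parts.filter (· ≠ 1), fun hi => p.parts_pos (Multiset.mem_filter.1 hi).1, rfl⟩⟩

theorem symFactor_addOnes {k n : ℕ} (q : k.Partition) (h : k ≤ n) (hq : 1 ∉ q.parts) :
    symFactor (q.addOnes h) = (n - k)! * symFactor q := by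
  have hcount (i : ℕ) :
      (q.addOnes h).parts.count i = (if i = 1 then n - k else 0) + q.parts.count i := by
    simp [addOnes, Multiset.count_replicate, eq_comm]
  have hones : ∏ i ∈ range (n + 1 + 1), (if i = 1 then (n - k)! else 1) = (n - k)! := by simp
  rw [symFactor_eq_prod_range _ (N := n + 1) (by omega),
    symFactor_eq_prod_range q (N := n + 1) (by omega), ← hones, ← prod_mul_distrib]
  refine prod_congr rfl fun i _ => ?_
  rw [hcount]
  split_ifs with hi
  · simp [hi, Multiset.count_eq_zero.2 hq]
  · simp

theorem replicate_count_one_add_filter {n : ℕ} (p : n.Partition) :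
    Multiset.replicate (p.parts.count 1) 1 + p.parts.filter (· ≠ 1) = p.parts := by
  rw [← Multiset.filter_eq', Multiset.filter_add_not]

theorem count_one_add_removeOnes_fst {n : ℕ} (p : n.Partition) :
    p.parts.count 1 + p.removeOnes.1 = n := by
  conv_rhs => rw [← p.parts_sum, ← p.replicate_count_one_add_filter]
  simp [removeOnes]

theorem removeOnes_fst_le {n : ℕ} (p : n.Partition) : p.removeOnes.1 ≤ n :=
  p.count_one_add_removeOnes_fst.le.trans' (Nat.le_add_left _ _)

theorem one_notMem_removeOnes {n : ℕ} (p : n.Partition) : 1 ∉ p.removeOnes.2.parts := by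
  simp [removeOnes]

theorem sigma_mk_eq_of_parts_eq {a b : ℕ} {p : a.Partition} {q : b.Partition}
    (h : p.parts = q.parts) : (⟨a, p⟩ : (k : ℕ) × k.Partition) = ⟨b, q⟩ := by
  obtain rfl : a = b := by rw [← p.parts_sum, ← q.parts_sum, h]
  rw [Nat.Partition.ext h]

theorem removeOnes_addOnes {k n : ℕ} (q : k.Partition) (h : k ≤ n) (hq : 1 ∉ q.parts) :
    (q.addOnes h).removeOnes = ⟨k, q⟩ :=
  sigma_mk_eq_of_parts_eq <| by
    have hones : (Multiset.replicate (n - k) 1).filter (· ≠ 1) = 0 :=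
      Multiset.filter_eq_nil.2 fun a ha => not_not.2 (Multiset.eq_of_mem_replicate ha)
    have hq' : q.parts.filter (· ≠ 1) = q.parts :=
      Multiset.filter_eq_self.2 fun a ha (h1 : a = 1) => hq (h1 ▸ ha)
    simp only [addOnes, Multiset.filter_add, hones, hq', zero_add]

theorem addOnes_removeOnes {n : ℕ} (p : n.Partition) :
    p.removeOnes.2.addOnes p.removeOnes_fst_le = p := by
  ext1
  conv_rhs => rw [← p.replicate_count_one_add_filter]
  simp only [addOnes, ← p.count_one_add_removeOnes_fst, Nat.add_sub_cancel]
  rfl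

end Nat.Partition

theorem symSumNoOnes_le (k : ℕ) : symSumNoOnes k ≤ 4 ^ k * (k / 2)! := by
  have hterm : ∀ q ∈ univ.filter (fun q : k.Partition => 1 ∉ q.parts),
      symFactor q ≤ 2 ^ k * (k / 2)! := fun q hq => by
    have := q.two_mul_card_parts_le (mem_filter.1 hq).2
    exact q.symFactor_le.trans (Nat.mul_le_mul_left _ (Nat.factorial_le (by omega)))
  calc symSumNoOnes k ≤ Fintype.card k.Partition * (2 ^ k * (k / 2)!) :=
        (sum_le_card_nsmul _ _ _ hterm).trans (Nat.mul_le_mul_right _ (card_filter_le _ _))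
    _ ≤ 2 ^ k * (2 ^ k * (k / 2)!) := Nat.mul_le_mul_right _ (Nat.Partition.card_le_two_pow k)
    _ = 4 ^ k * (k / 2)! := by rw [← mul_assoc, ← mul_pow]; rfl

theorem Z3_eq_sum_factorial_mul_symSumNoOnes (n : ℕ) :
    Z3 n = ∑ k ∈ range (n + 1), (n - k)! * symSumNoOnes k := by
  simp only [symSumNoOnes, mul_sum]
  rw [sum_sigma', Z3]
  symm
  refine sum_bij' (fun x hx => x.2.addOnes (mem_range_succ_iff.1 (mem_sigma.1 hx).1))
    (fun p _ => p.removeOnes) (fun _ _ => mem_univ _) (fun p _ => ?_) (fun x hx => ?_)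
    (fun p _ => p.addOnes_removeOnes) (fun x hx => ?_)
  · simpa using ⟨p.removeOnes_fst_le, p.one_notMem_removeOnes⟩
  · simp only [mem_sigma, mem_filter] at hx
    exact x.2.removeOnes_addOnes _ hx.2.2
  · simp only [mem_sigma, mem_filter] at hx
    exact (x.2.symFactor_addOnes _ hx.2.2).symm

theorem Z3_eq_S31_add {K n : ℕ} (hK : K ≤ n) :
    Z3 n = S31 K n + ∑ k ∈ Ico (K + 1) (n + 1), (n - k)! * symSumNoOnes k := by
  rw [Z3_eq_sum_factorial_mul_symSumNoOnes, S31, range_eq_Ico, range_eq_Ico,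
    sum_Ico_consecutive _ (Nat.zero_le _) (by omega)]

theorem factorial_sub_div_factorial_le {n j : ℕ} (h : 2 * j ≤ n + 1) :
    ((n - j)! : ℝ) / n ! ≤ (2 / n) ^ j := by
  rcases Nat.eq_zero_or_pos n with rfl | hn
  · obtain rfl : j = 0 := by omega
    simp
  have hdesc : ((n : ℝ) / 2) ^ j ≤ n.descFactorial j :=
    calc ((n : ℝ) / 2) ^ j ≤ ((n + 1 - j : ℕ) : ℝ) ^ j := by
          gcongr
          rw [Nat.cast_sub (by omega)]
          have : (2 * j : ℝ) ≤ n + 1 := by exact_mod_cast h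
          push_cast
          linarith
      _ ≤ n.descFactorial j := by exact_mod_cast Nat.pow_sub_le_descFactorial n j
  rw [← Nat.factorial_mul_descFactorial (by omega : j ≤ n), Nat.cast_mul,
    div_mul_cancel_left₀ (by positivity), ← inv_div, inv_pow]
  exact inv_anti₀ (by positivity) hdesc

theorem tendsto_pow_mul_factorial_sub_div_factorial {K k : ℕ} (hKk : K < k) :
    Tendsto (fun n : ℕ => (n : ℝ) ^ K * ((n - k)! / n !)) atTop (𝓝 0) := by
  refine squeeze_zero' (.of_forall fun n => by positivity) ?_
    (tendsto_const_div_atTop_nhds_zero_nat (2 ^ k))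
  filter_upwards [eventually_ge_atTop (2 * k), eventually_ge_atTop 1] with n hkn hn
  have hn' : (1 : ℝ) ≤ n := by exact_mod_cast hn
  calc (n : ℝ) ^ K * ((n - k)! / n !) ≤ n ^ K * (2 / n) ^ k := by
        gcongr; exact factorial_sub_div_factorial_le (by omega)
    _ = n ^ K * 2 ^ k / n ^ k := by rw [div_pow, mul_div_assoc]
    _ ≤ n ^ K * 2 ^ k / n ^ (K + 1) := by gcongr; exact hKk
    _ = 2 ^ k / n := by field_simp; ring

theorem factorial_sub_mul_div_factorial_le {C a : ℝ} (hC : 1 ≤ C) {n k : ℕ} (hk : k ≤ n)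
    (ha : a ≤ C ^ k * (k / 2)!) : (n - k)! * a / n ! ≤ (2 * C ^ 2 / n) ^ (k - k / 2) := by
  have hfact : ((n - k)! * (k / 2)! : ℝ) ≤ (n - (k - k / 2))! := by
    have := Nat.factorial_mul_factorial_dvd_factorial_add (n - k) (k / 2)
    rw [show n - k + k / 2 = n - (k - k / 2) by omega] at this
    exact_mod_cast Nat.le_of_dvd (Nat.factorial_pos _) this
  have hCk : C ^ k ≤ (C ^ 2) ^ (k - k / 2) := by
    rw [← pow_mul]; exact pow_le_pow_right₀ hC (by omega)
  calc (n - k)! * a / n ! ≤ (n - k)! * (C ^ k * (k / 2)!) / n ! := by gcongr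
    _ = C ^ k * ((n - k)! * (k / 2)!) / n ! := by ring
    _ ≤ (C ^ 2) ^ (k - k / 2) * (n - (k - k / 2))! / n ! := by gcongr
    _ = (C ^ 2) ^ (k - k / 2) * ((n - (k - k / 2))! / n !) := by rw [mul_div_assoc]
    _ ≤ (C ^ 2) ^ (k - k / 2) * (2 / n) ^ (k - k / 2) := by
        gcongr; exact factorial_sub_div_factorial_le (by omega)
    _ = (2 * C ^ 2 / n) ^ (k - k / 2) := by rw [← mul_pow]; ring

section FactorialTail

variable {a : ℕ → ℝ} {C : ℝ}

theorem tendsto_pow_mul_sum_Ico_factorial_sub_mul_div_factorial_of_lt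
    (hC : 1 ≤ C) (ha₀ : ∀ k, 0 ≤ a k) (ha : ∀ k, a k ≤ C ^ k * (k / 2)!) {K M : ℕ}
    (hM : 2 * K + 2 < M) :
    Tendsto (fun n : ℕ => (n : ℝ) ^ K * ((∑ k ∈ Ico M (n + 1), (n - k)! * a k) / n !))
      atTop (𝓝 0) := by
  set D := 2 * C ^ 2
  refine squeeze_zero' (.of_forall fun n =>
    mul_nonneg (by positivity) (div_nonneg (sum_nonneg fun k _ => by have := ha₀ k; positivity)
      (by positivity))) ?_ (tendsto_const_div_atTop_nhds_zero_nat (D ^ (K + 2)))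
  filter_upwards [tendsto_natCast_atTop_atTop.eventually_ge_atTop D, eventually_ge_atTop 1]
    with n hDn hn
  have hn' : (0 : ℝ) < n := by exact_mod_cast hn
  have hterm : ∀ k ∈ Ico M (n + 1), (n - k)! * a k / n ! ≤ (D / n) ^ (K + 2) := by
    intro k hk
    rw [mem_Ico] at hk
    exact (factorial_sub_mul_div_factorial_le hC (by omega) (ha k)).trans
      (pow_le_pow_of_le_one (by positivity) ((div_le_one hn').2 hDn) (by omega))
  calc (n : ℝ) ^ K * ((∑ k ∈ Ico M (n + 1), (n - k)! * a k) / n !)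
      ≤ n ^ K * (#(Ico M (n + 1)) • (D / n) ^ (K + 2)) := by
        rw [sum_div]; gcongr; exact sum_le_card_nsmul _ _ _ hterm
    _ ≤ n ^ K * (n * (D / n) ^ (K + 2)) := by
        rw [nsmul_eq_mul, Nat.card_Ico]
        gcongr
        exact_mod_cast (by omega : n + 1 - M ≤ n)
    _ = D ^ (K + 2) / n := by rw [div_pow]; field_simp; ring

theorem tendsto_pow_mul_sum_Ico_factorial_sub_mul_div_factorial
    (hC : 1 ≤ C) (ha₀ : ∀ k, 0 ≤ a k) (ha : ∀ k, a k ≤ C ^ k * (k / 2)!) (K : ℕ) :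
    Tendsto (fun n : ℕ => (n : ℝ) ^ K * ((∑ k ∈ Ico (K + 1) (n + 1), (n - k)! * a k) / n !))
      atTop (𝓝 0) := by
  have hhead : Tendsto (fun n : ℕ => ∑ k ∈ Ico (K + 1) (2 * K + 3),
      a k * ((n : ℝ) ^ K * ((n - k)! / n !))) atTop (𝓝 0) := by
    simpa using tendsto_finsetSum _ fun k hk =>
      (tendsto_pow_mul_factorial_sub_div_factorial (by rw [mem_Ico] at hk; omega)).const_mul (a k)
  have htail := tendsto_pow_mul_sum_Ico_factorial_sub_mul_div_factorial_of_lt hC ha₀ ha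
    (lt_add_one (2 * K + 2))
  refine (zero_add (0 : ℝ) ▸ hhead.add htail).congr' ?_
  filter_upwards [eventually_ge_atTop (2 * K + 2)] with n hn
  rw [← sum_Ico_consecutive _ (by omega : K + 1 ≤ 2 * K + 3) (by omega : 2 * K + 3 ≤ n + 1),
    add_div, mul_add, sum_div (Ico (K + 1) _), mul_sum (Ico (K + 1) _)]
  congr 1
  exact sum_congr rfl fun k _ => by ring

end FactorialTail

/-- For every fixed `K ≥ 0`,
`lim_{n→∞} n^K · (Z_3(n)/n! − S_{3;1;K}(n)/n!) = 0`. -/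
theorem Z3_asymptotic_expansion (K : ℕ) :
    Tendsto (fun n : ℕ =>
      (n : ℝ) ^ K * ((Z3 n : ℝ) / (n.factorial : ℝ) - (S31 K n : ℝ) / (n.factorial : ℝ)))
      atTop (nhds 0) := by
  refine (tendsto_pow_mul_sum_Ico_factorial_sub_mul_div_factorial (C := 4) (by norm_num)
    (fun k => (symSumNoOnes k).cast_nonneg) (fun k => by exact_mod_cast symSumNoOnes_le k) K).congr' ?_
  filter_upwards [eventually_ge_atTop K] with n hn
  rw [← sub_div, Z3_eq_S31_add hn]
  push_cast
  ring
end

section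
/- For every integer n ≥ 5, one has f(n, n−2) ≤ f(n, n). More precisely, for even n the exact ratio is f(n,n)/f(n,n−2) = (P_1(n)/P_1(n−2)) · (n/2), and for odd n it is f(n,n)/f(n,n−2) = (P_1(n)/P_1(n−2)) · ((n−3)/2); in both cases the ratio is at least 1 since P_1(n) ≥ P_1(n−2). -/
open Finset Filter

/-- `P_1(k)`: the number of partitions of `k` with no part equal to 1. -/
def P1 (k : ℕ) : ℕ :=
  (Finset.univ.filter (fun q : Nat.Partition k => 1 ∉ q.parts)).card

/-- `f(n,k) = ((n−k)!/n!) · P_1(k) · 2^(k/2) · (k/2)!` for even `k`, and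
`f(n,k) = ((n−k)!/n!) · P_1(k) · 2^((k−3)/2) · ((k−3)/2)!` for odd `k`. -/
noncomputable def f (n k : ℕ) : ℝ :=
  if Even k then
    ((n - k).factorial : ℝ) / (n.factorial : ℝ) * (P1 k : ℝ) * 2 ^ (k / 2) *
      ((k / 2).factorial : ℝ)
  else
    ((n - k).factorial : ℝ) / (n.factorial : ℝ) * (P1 k : ℝ) * 2 ^ ((k - 3) / 2) *
      (((k - 3) / 2).factorial : ℝ)

def addTwo {k : ℕ} (q : Nat.Partition k) : Nat.Partition (k + 2) :=
  ⟨2 ::ₘ q.parts, by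
    intro i hi
    rcases Multiset.mem_cons.1 hi with h | h
    · simp [h]
    · exact q.parts_pos h, by simp [q.parts_sum, add_comm]⟩

lemma P1_le (k : ℕ) : P1 k ≤ P1 (k + 2) := by
  classical
  apply Finset.card_le_card_of_injOn addTwo
  · intro q hq
    simp only [Finset.mem_coe, Finset.mem_filter, Finset.mem_univ, true_and] at hq ⊢
    simp [addTwo, Multiset.mem_cons, hq]
  · intro a _ b _ hab
    have : (2 : ℕ) ::ₘ a.parts = 2 ::ₘ b.parts := congrArg Nat.Partition.parts hab
    exact Nat.Partition.ext ((Multiset.cons_inj_right 2).1 this)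

lemma P1_pos (k : ℕ) (hk : 2 ≤ k) : 0 < P1 k := by
  classical
  apply Finset.card_pos.2
  refine ⟨Nat.Partition.indiscrete k, ?_⟩
  simp only [Finset.mem_filter, Finset.mem_univ, true_and]
  rw [Nat.Partition.indiscrete_parts (by omega)]
  simp
  omega


set_option maxHeartbeats 2000000 in
/-- For every `n ≥ 5`, `f(n, n−2) ≤ f(n, n)`. More precisely, for even `n` the
ratio is `f(n,n)/f(n,n−2) = (P_1(n)/P_1(n−2)) · (n/2)`, and for odd `n` it is
`(P_1(n)/P_1(n−2)) · ((n−3)/2)`; in both cases it is at least 1 since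
`P_1(n) ≥ P_1(n−2)`. -/
theorem f_increasing_at_end (n : ℕ) (hn : 5 ≤ n) :
    f n (n - 2) ≤ f n n ∧
    (Even n → f n n / f n (n - 2) = ((P1 n : ℝ) / (P1 (n - 2) : ℝ)) * ((n : ℝ) / 2)) ∧
    (Odd n → f n n / f n (n - 2) = ((P1 n : ℝ) / (P1 (n - 2) : ℝ)) * (((n : ℝ) - 3) / 2)) ∧
    P1 (n - 2) ≤ P1 n := by
  have hP : P1 (n - 2) ≤ P1 n := by
    have := P1_le (n - 2)
    rwa [show n - 2 + 2 = n by omega] at this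
  have hpos2 : 0 < P1 (n - 2) := P1_pos _ (by omega)
  have hP2R : (0 : ℝ) < (P1 (n - 2) : ℝ) := by exact_mod_cast hpos2
  have hPR : (P1 (n - 2) : ℝ) ≤ (P1 n : ℝ) := by exact_mod_cast hP
  have hnf : (0 : ℝ) < (n.factorial : ℝ) := by exact_mod_cast n.factorial_pos
  rcases Nat.even_or_odd n with heven | hodd
  · obtain ⟨a, ha⟩ := heven
    obtain ⟨m, hm⟩ : ∃ m, n = 2 * m := ⟨a, by omega⟩
    have hm3 : 3 ≤ m := by omega
    have e1 : n - (n - 2) = 2 := by omega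
    have e2 : Even (n - 2) := ⟨m - 1, by omega⟩
    have e3 : (n - 2) / 2 = m - 1 := by omega
    have e4 : n / 2 = m := by omega
    have hfac : (m.factorial : ℝ) = m * (m - 1).factorial := by
      have h := Nat.factorial_succ (m - 1)
      have h2 : m - 1 + 1 = m := by omega
      rw [h2] at h
      rw [h]; push_cast [h2]; ring
    have hpow : (2 : ℝ) ^ m = 2 * 2 ^ (m - 1) := by
      have h := pow_succ (2 : ℝ) (m - 1)
      rw [show m - 1 + 1 = m by omega] at h
      rw [h]; ring
    have hf2 : f n (n - 2) =
        2 / (n.factorial : ℝ) * (P1 (n - 2) : ℝ) * 2 ^ (m - 1) * ((m - 1).factorial : ℝ) := by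
      unfold f; rw [if_pos e2, e1, e3]; norm_num [Nat.factorial]
    have hf1 : f n n =
        1 / (n.factorial : ℝ) * (P1 n : ℝ) * 2 ^ m * (m.factorial : ℝ) := by
      have hevn : Even n := ⟨a, ha⟩
      unfold f; rw [if_pos hevn, Nat.sub_self, e4]; norm_num
    have hf2pos : 0 < f n (n - 2) := by rw [hf2]; positivity
    have hnR : (n : ℝ) = 2 * m := by exact_mod_cast congrArg Nat.cast hm
    have heq : f n n / f n (n - 2) = ((P1 n : ℝ) / (P1 (n - 2) : ℝ)) * ((n : ℝ) / 2) := by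
      rw [hf1, hf2, hfac, hpow, hnR]
      have h1 : ((m - 1).factorial : ℝ) ≠ 0 := by positivity
      have h2 : (2 : ℝ) ^ (m - 1) ≠ 0 := by positivity
      field_simp [hnf.ne', hP2R.ne', h1, h2]
    have hR1 : (1 : ℝ) ≤ ((P1 n : ℝ) / (P1 (n - 2) : ℝ)) * ((n : ℝ) / 2) := by
      have h3 : (1 : ℝ) ≤ (P1 n : ℝ) / (P1 (n - 2) : ℝ) := (one_le_div hP2R).2 hPR
      have h4 : (1 : ℝ) ≤ (n : ℝ) / 2 := by
        rw [hnR]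
        have : (3 : ℝ) ≤ (m : ℝ) := by exact_mod_cast hm3
        linarith
      nlinarith [h3, h4]
    refine ⟨?_, fun _ => heq, fun ho => absurd ⟨a, ha⟩ (Nat.not_even_iff_odd.2 ho), hP⟩
    exact (one_le_div hf2pos).1 (by rw [heq]; exact hR1)
  · obtain ⟨t, ht⟩ := hodd
    obtain ⟨m, hm⟩ : ∃ m, n = 2 * m + 3 := ⟨t - 1, by omega⟩
    have hm1 : 1 ≤ m := by omega
    have hne : ¬ Even n := by rw [Nat.even_iff]; omega
    have hne2 : ¬ Even (n - 2) := by
      intro ⟨b, hb⟩; exact hne ⟨b + 1, by omega⟩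
    have e1 : n - (n - 2) = 2 := by omega
    have e3 : (n - 2 - 3) / 2 = m - 1 := by omega
    have e4 : (n - 3) / 2 = m := by omega
    have hfac : (m.factorial : ℝ) = m * (m - 1).factorial := by
      have h := Nat.factorial_succ (m - 1)
      have h2 : m - 1 + 1 = m := by omega
      rw [h2] at h
      rw [h]; push_cast [h2]; ring
    have hpow : (2 : ℝ) ^ m = 2 * 2 ^ (m - 1) := by
      have h := pow_succ (2 : ℝ) (m - 1)
      rw [show m - 1 + 1 = m by omega] at h
      rw [h]; ring
    have hf2 : f n (n - 2) =
        2 / (n.factorial : ℝ) * (P1 (n - 2) : ℝ) * 2 ^ (m - 1) * ((m - 1).factorial : ℝ) := by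
      unfold f; rw [if_neg hne2, e1, e3]; norm_num [Nat.factorial]
    have hf1 : f n n =
        1 / (n.factorial : ℝ) * (P1 n : ℝ) * 2 ^ m * (m.factorial : ℝ) := by
      unfold f; rw [if_neg hne, Nat.sub_self, e4]; norm_num
    have hf2pos : 0 < f n (n - 2) := by rw [hf2]; positivity
    have hnR : (n : ℝ) = 2 * m + 3 := by exact_mod_cast congrArg Nat.cast hm
    have heq : f n n / f n (n - 2) = ((P1 n : ℝ) / (P1 (n - 2) : ℝ)) * (((n : ℝ) - 3) / 2) := by
      rw [hf1, hf2, hfac, hpow, hnR]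
      have h1 : ((m - 1).factorial : ℝ) ≠ 0 := by positivity
      have h2 : (2 : ℝ) ^ (m - 1) ≠ 0 := by positivity
      field_simp [hnf.ne', hP2R.ne', h1, h2]
      ring
    have hR1 : (1 : ℝ) ≤ ((P1 n : ℝ) / (P1 (n - 2) : ℝ)) * (((n : ℝ) - 3) / 2) := by
      have h3 : (1 : ℝ) ≤ (P1 n : ℝ) / (P1 (n - 2) : ℝ) := (one_le_div hP2R).2 hPR
      have h4 : (1 : ℝ) ≤ ((n : ℝ) - 3) / 2 := by
        rw [hnR]
        have : (1 : ℝ) ≤ (m : ℝ) := by exact_mod_cast hm1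
        linarith
      nlinarith [h3, h4]
    refine ⟨?_, fun he => absurd he hne, fun _ => heq, hP⟩
    exact (one_le_div hf2pos).1 (by rw [heq]; exact hR1)
end

section
/- For every fixed integer K ≥ 0, lim_{n→∞} n^K · P_1(n) · 2^{⌊n/2⌋} · (⌊n/2⌋)! / n! = 0; that is, the quantity P_1(n) · 2^{⌊n/2⌋} · (⌊n/2⌋)! is suppressed relative to n! faster than any power of 1/n. -/
open Finset Filter

def partToComp (n : ℕ) : Nat.Partition n → Composition n := fun q =>
    ⟨q.parts.sort (· ≤ ·),
     by intro i hi; exact q.parts_pos (by simpa using hi),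
     by
       have h1 : (q.parts.sort (· ≤ ·)).sum = q.parts.sum := by
         rw [← Multiset.sum_coe, Multiset.sort_eq]
       rw [h1, q.parts_sum]⟩
lemma P1_le_s14 (n : ℕ) : P1 n ≤ 2 ^ n := by
  have hf : Function.Injective (partToComp n) := by
    intro q1 q2 h
    have hb := congrArg Composition.blocks h
    simp only [partToComp] at hb
    have : q1.parts = q2.parts := by
      rw [← Multiset.sort_eq q1.parts (· ≤ ·), ← Multiset.sort_eq q2.parts (· ≤ ·), hb]
    exact Nat.Partition.ext this
  calc P1 n ≤ Fintype.card (Nat.Partition n) := by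
        simpa [P1] using Finset.card_filter_le Finset.univ _
    _ ≤ Fintype.card (Composition n) := Fintype.card_le_of_injective _ hf
    _ = 2 ^ (n - 1) := composition_card n
    _ ≤ 2 ^ n := Nat.pow_le_pow_right (by norm_num) (Nat.sub_le n 1)

lemma key_nat (n : ℕ) (hn : 128 ≤ n) :
    P1 n * 2 ^ (n / 2) * (n / 2).factorial * 2 ^ n ≤ 2 * n.factorial := by
  set m := n / 2 with hm
  have hm64 : 64 ≤ m := by omega
  have hfact : m.factorial * (m + 1) ^ (n - m) ≤ n.factorial := by
    have := @Nat.factorial_mul_pow_le_factorial m (n - m)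
    rwa [show m + (n - m) = n by omega] at this
  have hpow : 2 ^ n * 2 ^ m * 2 ^ n ≤ 2 * (m + 1) ^ (n - m) := by
    have h1 : 2 ^ n * 2 ^ m * 2 ^ n = 2 ^ (2 * n + m) := by ring
    have h2 : 2 ^ (2 * n + m) ≤ 2 ^ (5 * m + 2) :=
      Nat.pow_le_pow_right (by norm_num) (by omega)
    have h3 : (2 : ℕ) ^ (5 * m + 2) = 4 * 32 ^ m := by
      rw [pow_add, pow_mul]; norm_num [mul_comm]
    have h4 : 4 * 32 ^ m ≤ 2 * 64 ^ m := by
      have : 2 * 32 ^ m ≤ 64 ^ m := by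
        calc 2 * 32 ^ m ≤ 2 ^ m * 32 ^ m := by
              exact Nat.mul_le_mul_right _ (by
                calc 2 = 2 ^ 1 := (pow_one 2).symm
                  _ ≤ 2 ^ m := Nat.pow_le_pow_right (by norm_num) (by omega))
          _ = 64 ^ m := by rw [← mul_pow]; norm_num
      omega
    have h5 : 64 ^ m ≤ (m + 1) ^ (n - m) := by
      calc 64 ^ m ≤ (m + 1) ^ m :=
            Nat.pow_le_pow_left (by omega) m
        _ ≤ (m + 1) ^ (n - m) := Nat.pow_le_pow_right (by omega) (by omega)
    calc 2 ^ n * 2 ^ m * 2 ^ n = 2 ^ (2 * n + m) := h1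
      _ ≤ 2 ^ (5 * m + 2) := h2
      _ = 4 * 32 ^ m := h3
      _ ≤ 2 * 64 ^ m := h4
      _ ≤ 2 * (m + 1) ^ (n - m) := Nat.mul_le_mul_left _ h5
  calc P1 n * 2 ^ m * m.factorial * 2 ^ n
      ≤ 2 ^ n * 2 ^ m * m.factorial * 2 ^ n := by
        exact Nat.mul_le_mul_right _ (Nat.mul_le_mul_right _
          (Nat.mul_le_mul_right _ (P1_le_s14 n)))
    _ = (2 ^ n * 2 ^ m * 2 ^ n) * m.factorial := by ring
    _ ≤ (2 * (m + 1) ^ (n - m)) * m.factorial := Nat.mul_le_mul_right _ hpow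
    _ = 2 * (m.factorial * (m + 1) ^ (n - m)) := by ring
    _ ≤ 2 * n.factorial := Nat.mul_le_mul_left _ hfact

/-- For every fixed `K ≥ 0`,
`lim_{n→∞} n^K · P_1(n) · 2^⌊n/2⌋ · ⌊n/2⌋! / n! = 0`: the quantity
`P_1(n) · 2^⌊n/2⌋ · ⌊n/2⌋!` is suppressed relative to `n!` faster than any
power of `1/n`. -/
theorem suppression_faster_than_any_power (K : ℕ) :
    Tendsto (fun n : ℕ =>
      (n : ℝ) ^ K * (P1 n : ℝ) * 2 ^ (n / 2) * ((n / 2).factorial : ℝ) /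
        (n.factorial : ℝ))
      atTop (nhds 0) := by
  have hg : Tendsto (fun n : ℕ => 2 * ((n : ℝ) ^ K * (1 / 2 : ℝ) ^ n)) atTop (nhds 0) := by
    have := (tendsto_pow_const_mul_const_pow_of_lt_one K
      (by norm_num : (0:ℝ) ≤ 1/2) (by norm_num : (1/2:ℝ) < 1)).const_mul (2 : ℝ)
    simpa using this
  apply squeeze_zero' ?_ ?_ hg
  · filter_upwards [eventually_ge_atTop 0] with n _
    positivity
  · filter_upwards [eventually_ge_atTop 128] with n hn
    have key := key_nat n hn
    have keyR : ((P1 n : ℝ) * 2 ^ (n / 2) * ((n / 2).factorial : ℝ)) * 2 ^ n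
        ≤ 2 * (n.factorial : ℝ) := by exact_mod_cast key
    have hfac : (0 : ℝ) < (n.factorial : ℝ) := by positivity
    have h2n : (0 : ℝ) < (2 : ℝ) ^ n := by positivity
    rw [div_le_iff₀ hfac]
    have hhalf : (1 / 2 : ℝ) ^ n = ((2 : ℝ) ^ n)⁻¹ := by
      rw [one_div, inv_pow]
    rw [hhalf]
    have inner : (P1 n : ℝ) * 2 ^ (n / 2) * ((n / 2).factorial : ℝ)
        ≤ 2 * (n.factorial : ℝ) * ((2 : ℝ) ^ n)⁻¹ := by
      rw [← div_eq_mul_inv, le_div_iff₀ h2n]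
      exact keyR
    have hKnn : (0 : ℝ) ≤ (n : ℝ) ^ K := by positivity
    calc (n : ℝ) ^ K * (P1 n : ℝ) * 2 ^ (n / 2) * ((n / 2).factorial : ℝ)
        = (n : ℝ) ^ K * ((P1 n : ℝ) * 2 ^ (n / 2) * ((n / 2).factorial : ℝ)) := by ring
      _ ≤ (n : ℝ) ^ K * (2 * (n.factorial : ℝ) * ((2 : ℝ) ^ n)⁻¹) :=
          mul_le_mul_of_nonneg_left inner hKnn
      _ = 2 * ((n : ℝ) ^ K * ((2 : ℝ) ^ n)⁻¹) * (n.factorial : ℝ) := by ring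
end
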